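/- arXiv:1609.03199 — 11 statements merged into one kernel-verified Lean document; each statement's English description precedes it below -/
import Mathlib

section
/- Let f : Fin k → Fin k and x : Fin k. If f^{k-2}(x) is not a periodic point of f (i.e., there is no m ≥ 1 with f^m(f^{k-2}(x)) = f^{k-2}(x)), then f^{k-1} is a constant function. -/
/-- If f^{k-2}(x) is not a periodic point of f : Fin k → Fin k, then f^{k-1}
is a constant function. -/
theorem not_periodic_imp_const (k : ℕ) (hk : 2 ≤ k) (f : Fin k → Fin k) (x : Fin k)
    (h : ¬ ∃ m : ℕ, 1 ≤ m ∧ f^[m] (f^[k - 2] x) = f^[k - 2] x) :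
    ∃ c : Fin k, ∀ y : Fin k, f^[k - 1] y = c := by
  set P : Fin k → Prop := fun p => ∃ m, 1 ≤ m ∧ f^[m] p = p with hP
  -- iterate of periodic is periodic
  have hiter : ∀ p, P p → ∀ n, P (f^[n] p) := by
    rintro p ⟨m, hm, hpm⟩ n
    exact ⟨m, hm, by
      rw [← Function.iterate_add_apply, Nat.add_comm, Function.iterate_add_apply, hpm]⟩
  -- every point reaches a periodic point within k-1 steps
  have hreach : ∀ y, ∃ i, i ≤ k - 1 ∧ P (f^[i] y) := by
    intro y
    have hninj : ¬ Function.Injective (fun i : Fin (k+1) => f^[(i:ℕ)] y) := by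
      intro hinj
      have := Fintype.card_le_of_injective _ hinj
      simp at this
    rw [Function.not_injective_iff] at hninj
    obtain ⟨a, b, hab, hne⟩ := hninj
    have ha := a.isLt
    have hb := b.isLt
    have hne' : (a : ℕ) ≠ b := fun e => hne (Fin.ext e)
    rcases lt_or_gt_of_ne hne' with hlt | hlt
    · refine ⟨a, by omega, (b:ℕ) - a, by omega, ?_⟩
      rw [← Function.iterate_add_apply]
      have e : (b:ℕ) - a + a = b := by omega
      rw [e, hab]
    · refine ⟨b, by omega, (a:ℕ) - b, by omega, ?_⟩
      rw [← Function.iterate_add_apply]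
      have e : (a:ℕ) - b + b = a := by omega
      rw [e, ← hab]
  -- points f^[i] x for i ≤ k-2 are not periodic
  have hnp : ∀ i, i ≤ k - 2 → ¬ P (f^[i] x) := by
    intro i hi hPi
    apply h
    have : f^[k - 2] x = f^[k - 2 - i] (f^[i] x) := by
      rw [← Function.iterate_add_apply]
      congr 1
      omega
    rw [this]
    exact hiter _ hPi _
  -- the map i ↦ f^[i] x on Fin (k-1) is injective
  have hginj : Function.Injective (fun i : Fin (k-1) => f^[(i:ℕ)] x) := by
    intro a b hab0
    have hab : f^[(a:ℕ)] x = f^[(b:ℕ)] x := hab0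
    by_contra hne
    have ha := a.isLt
    have hb := b.isLt
    have hne' : (a : ℕ) ≠ b := fun e => hne (Fin.ext e)
    rcases lt_or_gt_of_ne hne' with hlt | hlt
    · exact hnp a (by omega) ⟨(b:ℕ) - a, by omega, by
        rw [← Function.iterate_add_apply]
        have e : (b:ℕ) - a + a = b := by omega
        rw [e, hab]⟩
    · exact hnp b (by omega) ⟨(a:ℕ) - b, by omega, by
        rw [← Function.iterate_add_apply]
        have e : (a:ℕ) - b + b = a := by omega
        rw [e, ← hab]⟩
  -- the periodic point is unique
  have huniq : ∀ p q, P p → P q → p = q := by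
    intro p q hp hq
    by_contra hpq
    set S : Finset (Fin k) := Finset.image (fun i : Fin (k-1) => f^[(i:ℕ)] x) Finset.univ with hS
    have hcardS : S.card = k - 1 := by
      rw [hS, Finset.card_image_of_injective _ hginj, Finset.card_univ, Fintype.card_fin]
    have hpS : p ∉ S := by
      intro hmem
      rw [hS, Finset.mem_image] at hmem
      obtain ⟨i, _, hi⟩ := hmem
      exact hnp i (by have := i.isLt; omega) (hi ▸ hp)
    have hqS : q ∉ S := by
      intro hmem
      rw [hS, Finset.mem_image] at hmem
      obtain ⟨i, _, hi⟩ := hmem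
      exact hnp i (by have := i.isLt; omega) (hi ▸ hq)
    have hcard : (insert p (insert q S)).card = k + 1 := by
      rw [Finset.card_insert_of_notMem (by simp [hpq, hpS]),
          Finset.card_insert_of_notMem hqS, hcardS]
      omega
    have := Finset.card_le_card (Finset.subset_univ (insert p (insert q S)))
    rw [hcard, Finset.card_univ, Fintype.card_fin] at this
    omega
  -- get the periodic point c
  obtain ⟨i, hi, hPi⟩ := hreach x
  set c := f^[i] x with hc
  have hfc : f c = c := huniq _ _ (by simpa using hiter _ hPi 1) hPi
  refine ⟨c, fun y => ?_⟩
  obtain ⟨j, hj, hPj⟩ := hreach y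
  have hjc : f^[j] y = c := huniq _ _ hPj hPi
  have : f^[k - 1] y = f^[k - 1 - j] (f^[j] y) := by
    rw [← Function.iterate_add_apply]
    congr 1
    omega
  rw [this, hjc, Function.iterate_fixed hfc]
end

section
/- For every k ≥ 2, the pair (x^{k-2} y x^{k-1}, x^{k-2+L} y x^{k-1}) with L = lcm(1,...,k) is an identity of T_k: for all functions f, g : Fin k → Fin k, the composition f^{k-1} ∘ g ∘ f^{k-2} equals f^{k-1} ∘ g ∘ f^{k-2+L} (applying maps left to right, i.e., for every x : Fin k, f^{k-1}(g(f^{k-2}(x))) = f^{k-1}(g(f^{k-2+L}(x)))). -/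
private lemma iter_per {α : Type*} (f : α → α) (x : α) (i d : ℕ)
    (h : f^[i + d] x = f^[i] x) : ∀ m, f^[i + m * d] x = f^[i] x := by
  intro m
  induction m with
  | zero => simp
  | succ n ih =>
    have e : i + (n + 1) * d = n * d + (i + d) := by ring
    rw [e, Function.iterate_add_apply, h, ← Function.iterate_add_apply]
    rw [Nat.add_comm] at ih
    exact ih

private lemma iter_fix {α : Type*} (f : α → α) (y : α) (h : f y = y) :
    ∀ m, f^[m] y = y := by
  intro m
  induction m with
  | zero => simp
  | succ n ih => rw [Function.iterate_succ_apply, h, ih]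

/-- The non-uniform identity x^{k-2} y x^{k-1} ≡ x^{k-2+L} y x^{k-1} in T_k,
with L = lcm(1,...,k), words acting in reading order. -/
theorem nonuniform_identity (k : ℕ) (hk : 2 ≤ k) (f g : Fin k → Fin k) (x : Fin k) :
    f^[k - 1] (g (f^[k - 2] x)) =
    f^[k - 1] (g (f^[k - 2 + (Finset.Icc 1 k).lcm id] x)) := by
  classical
  set L := (Finset.Icc 1 k).lcm id with hL
  -- pigeonhole: a collision in the orbit within the first k+1 points
  have hne : ∃ n : ℕ, ∃ m, n < m ∧ m ≤ k ∧ f^[n] x = f^[m] x := by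
    have hcard : Fintype.card (Fin k) < Fintype.card (Fin (k + 1)) := by simp
    obtain ⟨a, b, hab, heq⟩ :=
      Fintype.exists_ne_map_eq_of_card_lt (fun n : Fin (k + 1) => f^[(n : ℕ)] x) hcard
    rcases lt_or_gt_of_ne (fun h => hab (Fin.ext h) : (a : ℕ) ≠ (b : ℕ)) with h | h
    · exact ⟨a, b, h, Nat.lt_succ_iff.mp b.isLt, heq⟩
    · exact ⟨b, a, h, Nat.lt_succ_iff.mp a.isLt, heq.symm⟩
  set i := Nat.find hne with hi
  obtain ⟨j, hij, hjk, heq⟩ := Nat.find_spec hne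
  by_cases hsmall : i ≤ k - 2
  · -- periodic case
    set d := j - i with hd
    have hd1 : 1 ≤ d := by omega
    have hdk : d ≤ k := by omega
    have hdvd : d ∣ L := by
      have : d ∈ Finset.Icc 1 k := by simp [hd1, hdk]
      simpa using Finset.dvd_lcm (f := (id : ℕ → ℕ)) this
    obtain ⟨m, hm⟩ := hdvd
    have hper : f^[i + m * d] x = f^[i] x := by
      apply iter_per
      have : i + d = j := by omega
      rw [this, heq]
    have key : f^[k - 2 + L] x = f^[k - 2] x := by
      have e1 : k - 2 + L = (k - 2 - i) + (i + m * d) := by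
        rw [hm, Nat.mul_comm]; omega
      have e2 : k - 2 = (k - 2 - i) + i := by omega
      rw [e1, Function.iterate_add_apply, hper, ← Function.iterate_add_apply, ← e2]
    rw [key]
  · -- i = k - 1 : f^[k-1] is constant
    have hik : i = k - 1 := by
      have hik' : i ≤ k - 1 := by
        have := Nat.find_min' hne ⟨j, hij, hjk, heq⟩
        omega
      omega
    have hjeq : j = k := by omega
    have heq' : f^[i] x = f^[j] x := heq
    have hkey : f^[k] x = f^[k - 1] x := by
      calc f^[k] x = f^[j] x := by rw [hjeq]
        _ = f^[i] x := heq'.symm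
        _ = f^[k - 1] x := by rw [hik]
    have hfix : f (f^[k - 1] x) = f^[k - 1] x := by
      rw [← Function.iterate_succ_apply' f (k - 1) x]
      have e : (k - 1).succ = k := by omega
      rw [e, hkey]
    have hinj : Function.Injective (fun n : Fin k => f^[(n : ℕ)] x) := by
      intro a b hab
      by_contra hne'
      have hne'' : (a : ℕ) ≠ (b : ℕ) := fun h => hne' (Fin.ext h)
      rcases lt_or_gt_of_ne hne'' with h | h
      · have : i ≤ (a : ℕ) := Nat.find_min' hne ⟨b, h, Nat.le_of_lt b.isLt, hab⟩
        omega
      · have : i ≤ (b : ℕ) := Nat.find_min' hne ⟨a, h, Nat.le_of_lt a.isLt, hab.symm⟩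
        omega
    have hsurj : Function.Surjective (fun n : Fin k => f^[(n : ℕ)] x) :=
      Finite.surjective_of_injective hinj
    have hconst : ∀ z : Fin k, f^[k - 1] z = f^[k - 1] x := by
      intro z
      obtain ⟨n, hn⟩ := hsurj z
      have hn' : f^[(n : ℕ)] x = z := hn
      calc f^[k - 1] z = f^[k - 1] (f^[(n : ℕ)] x) := by rw [hn']
        _ = f^[(n : ℕ)] (f^[k - 1] x) := by
            rw [← Function.iterate_add_apply, ← Function.iterate_add_apply, Nat.add_comm]
        _ = f^[k - 1] x := iter_fix f _ hfix _
    rw [hconst (g (f^[k - 2] x)), hconst (g (f^[k - 2 + L] x))]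
end

section
/- For every k ≥ 2 and L = lcm(1,...,k), and all functions f, g : Fin k → Fin k, and every x : Fin k, one has f^{k-1}(g(f^{k-2+L}(x))) = f^{k-1+L}(g(f^{k-2}(x))). (This is the balanced identity x^{k-2+L} y x^{k-1} ≡ x^{k-2} y x^{k-1+L} in T_k, read left to right.) -/
private lemma iter_stab {k : ℕ} (f : Fin k → Fin k) (x : Fin k) {t c : ℕ}
    (h : f^[t + c] x = f^[t] x) {m : ℕ} (hm : t ≤ m) (n : ℕ) :
    f^[m + n * c] x = f^[m] x := by
  induction n with
  | zero => simp
  | succ n ih =>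
    have h1 : m + (n + 1) * c = (m - t + n * c) + (t + c) := by
      rw [Nat.succ_mul]; omega
    rw [h1, Function.iterate_add_apply, h, ← Function.iterate_add_apply]
    have h2 : m - t + n * c + t = m + n * c := by omega
    rw [h2, ih]

private lemma exists_collision {k : ℕ} (hk : 1 ≤ k) (f : Fin k → Fin k) (x : Fin k) :
    ∃ t c, 1 ≤ c ∧ t + c ≤ k ∧ f^[t + c] x = f^[t] x := by
  have hni : ¬ Function.Injective (fun i : Fin (k + 1) => f^[(i : ℕ)] x) := by
    intro h
    have := Fintype.card_le_of_injective _ h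
    simp at this
  rw [Function.not_injective_iff] at hni
  obtain ⟨i, j, hfe, hne⟩ := hni
  have hfe' : f^[(i : ℕ)] x = f^[(j : ℕ)] x := hfe
  have hne' : (i : ℕ) ≠ (j : ℕ) := fun h => hne (Fin.ext h)
  rcases lt_or_gt_of_ne hne' with hlt | hlt
  · refine ⟨i, (j : ℕ) - i, by omega, by omega, ?_⟩
    have h3 : (i : ℕ) + ((j : ℕ) - i) = j := by omega
    rw [h3, hfe'.symm]
  · refine ⟨j, (i : ℕ) - j, by omega, by omega, ?_⟩
    have h3 : (j : ℕ) + ((i : ℕ) - j) = i := by omega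
    rw [h3, hfe']

private lemma cdvdL {k c : ℕ} (h1 : 1 ≤ c) (h2 : c ≤ k) :
    c ∣ (Finset.Icc 1 k).lcm id :=
  Finset.dvd_lcm (by simp [Finset.mem_Icc]; omega)

/-- f^[k-1+L] = f^[k-1] pointwise. -/
private lemma key1 {k : ℕ} (hk : 1 ≤ k) (f : Fin k → Fin k) (u : Fin k) :
    f^[k - 1 + (Finset.Icc 1 k).lcm id] u = f^[k - 1] u := by
  obtain ⟨t, c, hc, htc, heq⟩ := exists_collision hk f u
  obtain ⟨n, hn⟩ := cdvdL hc (by omega : c ≤ k)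
  have := iter_stab f u heq (m := k - 1) (by omega) n
  rwa [hn, Nat.mul_comm]

/-- The balanced identity x^{k-2+L} y x^{k-1} ≡ x^{k-2} y x^{k-1+L} in T_k,
with L = lcm(1,...,k). -/
theorem balanced_identity (k : ℕ) (hk : 2 ≤ k) (f g : Fin k → Fin k) (x : Fin k) :
    f^[k - 1] (g (f^[k - 2 + (Finset.Icc 1 k).lcm id] x)) =
    f^[k - 1 + (Finset.Icc 1 k).lcm id] (g (f^[k - 2] x)) := by
  rw [key1 (by omega) f]
  -- minimal preperiod of x
  have hex : ∃ t, ∃ c, 1 ≤ c ∧ t + c ≤ k ∧ f^[t + c] x = f^[t] x :=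
    let ⟨t, c, h⟩ := exists_collision (by omega) f x
    ⟨t, c, h⟩
  classical
  obtain ⟨c, hc1, htc, heq⟩ := Nat.find_spec hex
  by_cases hcase : Nat.find hex ≤ k - 2
  · -- preperiod small: f^[k-2+L] x = f^[k-2] x
    obtain ⟨n, hn⟩ := cdvdL hc1 (by omega : c ≤ k)
    have hs := iter_stab f x heq (m := k - 2) (by omega) n
    rw [show k - 2 + (Finset.Icc 1 k).lcm id = k - 2 + n * c by
      rw [hn, Nat.mul_comm]]
    rw [hs]
  · -- Nat.find hex = k-1, c = 1: orbit of x is all of Fin k, f^[k-1] is constant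
    have ht0k : Nat.find hex = k - 1 := by omega
    have hc : c = 1 := by omega
    subst hc
    rw [ht0k] at heq
    have hconst : ∀ i : ℕ, f^[k - 1] (f^[i] x) = f^[k - 1] x := by
      intro i
      have h := iter_stab f x heq (m := k - 1) (le_refl _) i
      rw [Nat.mul_one] at h
      rw [← Function.iterate_add_apply, h]
    have hinj : Function.Injective (fun i : Fin k => f^[(i : ℕ)] x) := by
      intro i j hfe
      have hfe' : f^[(i : ℕ)] x = f^[(j : ℕ)] x := hfe
      by_contra hne
      have hne' : (i : ℕ) ≠ (j : ℕ) := fun h => hne (Fin.ext h)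
      rcases lt_or_gt_of_ne hne' with hlt | hlt
      · have hP : ∃ c, 1 ≤ c ∧ (i : ℕ) + c ≤ k ∧ f^[(i : ℕ) + c] x = f^[(i : ℕ)] x := by
          refine ⟨(j : ℕ) - i, by omega, by omega, ?_⟩
          have h3 : (i : ℕ) + ((j : ℕ) - i) = j := by omega
          rw [h3, hfe'.symm]
        have := Nat.find_le (h := hex) hP
        omega
      · have hP : ∃ c, 1 ≤ c ∧ (j : ℕ) + c ≤ k ∧ f^[(j : ℕ) + c] x = f^[(j : ℕ)] x := by
          refine ⟨(i : ℕ) - j, by omega, by omega, ?_⟩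
          have h3 : (j : ℕ) + ((i : ℕ) - j) = i := by omega
          rw [h3, hfe']
        have := Nat.find_le (h := hex) hP
        omega
    have hsurj : Function.Surjective (fun i : Fin k => f^[(i : ℕ)] x) :=
      Finite.surjective_of_injective hinj
    obtain ⟨i, hi⟩ := hsurj (g (f^[k - 2 + (Finset.Icc 1 k).lcm id] x))
    obtain ⟨j, hj⟩ := hsurj (g (f^[k - 2] x))
    have hi' : f^[(i : ℕ)] x = g (f^[k - 2 + (Finset.Icc 1 k).lcm id] x) := hi
    have hj' : f^[(j : ℕ)] x = g (f^[k - 2] x) := hj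
    rw [← hi', ← hj', hconst, hconst]
end

section
/- Let u and v be words over a two-letter alphabet {x,y} such that |u|_x and |v|_x (the numbers of occurrences of x) are not congruent modulo some integer i with 1 ≤ i ≤ k. Then there exist functions f, g : Fin k → Fin k (with g the identity and f a cyclic permutation of a cycle of length i) such that the actions of u and v on Fin k differ; hence (u,v) is not an identity of T_k. -/
section Aux

variable (k i : ℕ)

/-- cyclic shift on the first `i` elements of `Fin k`. -/
def cyc (hik : i ≤ k) : Fin k → Fin k :=
  fun z => if h : (z : ℕ) < i then
    ⟨((z : ℕ) + 1) % i, lt_of_lt_of_le (Nat.mod_lt _ (lt_of_le_of_lt (Nat.zero_le _) h)) hik⟩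
  else z

lemma cyc_iter (hik : i ≤ k) (n : ℕ) (z : Fin k) (hz : (z : ℕ) < i) :
    ((cyc k i hik)^[n] z : ℕ) = ((z : ℕ) + n) % i := by
  induction n generalizing z with
  | zero => simpa using (Nat.mod_eq_of_lt hz).symm
  | succ n ih =>
    rw [Function.iterate_succ_apply]
    have hi0 : 0 < i := lt_of_le_of_lt (Nat.zero_le _) hz
    have h1 : (cyc k i hik z : ℕ) = ((z : ℕ) + 1) % i := by
      simp [cyc, hz]
    have h2 : (cyc k i hik z : ℕ) < i := h1 ▸ Nat.mod_lt _ hi0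
    rw [ih _ h2, h1, Nat.mod_add_mod]
    ring_nf

lemma cyc_iter_i (hi1 : 1 ≤ i) (hik : i ≤ k) : (cyc k i hik)^[i] = id := by
  funext z
  by_cases hz : (z : ℕ) < i
  · apply Fin.ext
    rw [cyc_iter k i hik i z hz]
    simp [Nat.add_mod, Nat.mod_eq_of_lt hz]
  · have hfix : cyc k i hik z = z := by simp [cyc, hz]
    simp [Function.iterate_fixed hfix]

lemma cyc_bij (hik : i ≤ k) : Function.Bijective (cyc k i hik) := by
  rw [Fintype.bijective_iff_injective_and_card]
  refine ⟨fun a b hab => ?_, rfl⟩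
  by_cases ha : (a : ℕ) < i <;> by_cases hb : (b : ℕ) < i <;>
    simp [cyc, ha, hb] at hab
  · apply Fin.ext
    have hm : (a : ℕ) ≡ (b : ℕ) [MOD i] := Nat.ModEq.add_right_cancel' 1 hab
    rw [← Nat.mod_eq_of_lt ha, ← Nat.mod_eq_of_lt hb]
    exact hm
  · exact absurd (hab ▸ Nat.mod_lt _ (lt_of_le_of_lt (Nat.zero_le _) ha)) hb
  · exact absurd (hab.symm ▸ Nat.mod_lt _ (lt_of_le_of_lt (Nat.zero_le _) hb)) ha
  · exact hab

lemma foldl_eq_iter (f : Fin k → Fin k) (w : List Bool) (z : Fin k) :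
    w.foldl (fun s a => if a then f s else s) z = f^[w.count true] z := by
  induction w generalizing z with
  | nil => rfl
  | cons a w ih =>
    cases a <;>
      simp [List.foldl_cons, ih, Function.iterate_succ_apply, List.count_cons]

end Aux

/-- If the numbers of x's in binary words u and v are incongruent modulo some
1 ≤ i ≤ k, then u and v act differently on Fin k for some substitution with g the
identity and f a cyclic permutation whose cycle has length i; hence (u,v) is not
an identity of T_k. Letters: `true` is x, `false` is y. -/
theorem count_incongruent_not_identity (k : ℕ) (u v : List Bool) (i : ℕ)
    (hi1 : 1 ≤ i) (hik : i ≤ k)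
    (h : ¬ Nat.ModEq i (u.count true) (v.count true)) :
    ∃ f g : Fin k → Fin k, g = id ∧ Function.Bijective f ∧ f^[i] = id ∧
      ∃ z : Fin k,
        u.foldl (fun s a => if a then f s else g s) z ≠
        v.foldl (fun s a => if a then f s else g s) z := by
  have hk : 0 < k := lt_of_lt_of_le hi1 hik
  refine ⟨cyc k i hik, id, rfl, cyc_bij k i hik, cyc_iter_i k i hi1 hik, ⟨0, hk⟩, ?_⟩
  simp only [id_eq]
  rw [foldl_eq_iter, foldl_eq_iter]
  intro hc
  apply h
  have hu := cyc_iter k i hik (u.count true) ⟨0, hk⟩ hi1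
  have hv := cyc_iter k i hik (v.count true) ⟨0, hk⟩ hi1
  have := congrArg Fin.val hc
  rw [hu, hv] at this
  simpa [Nat.ModEq] using this
end

section
/- If (u,v) is an identity of T_k for binary words u,v, then for every i ∈ {1,...,k}, |u|_x ≡ |v|_x (mod i) and |u|_y ≡ |v|_y (mod i); consequently |u|_x ≡ |v|_x and |u|_y ≡ |v|_y modulo lcm(1,...,k). -/
/-!
Substitute for the counted letter the cyclic shift `s ↦ (s + 1) % i` of `{0, …, i - 1} ⊆ Fin k`
and for the other letter the identity. Starting from `0`, the word `w` is then sent to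
`|w|_a % i`, so an identity forces `|u|_a ≡ |v|_a (mod i)`. Congruence modulo every `i ≤ k`
is congruence modulo their lcm.
-/

theorem Nat.ModEq.finset_lcm {ι : Type*} {S : Finset ι} {m : ι → ℕ} {a b : ℕ}
    (h : ∀ i ∈ S, a ≡ b [MOD m i]) : a ≡ b [MOD S.lcm m] := by
  wlog hab : a ≤ b generalizing a b
  · exact (this (fun i hi => (h i hi).symm) (le_of_not_ge hab)).symm
  exact (Nat.modEq_iff_dvd' hab).2 <| Finset.lcm_dvd fun i hi => (Nat.modEq_iff_dvd' hab).1 (h i hi)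

theorem List.foldl_ite_eq_iterate_count {α β : Type*} [DecidableEq α] (f : β → β) (c : α)
    (w : List α) (z : β) :
    w.foldl (fun s a => if a = c then f s else s) z = f^[w.count c] z := by
  induction w generalizing z with
  | nil => rfl
  | cons a w ih =>
    by_cases hac : a = c
    · simp [hac, ih, Function.iterate_succ_apply]
    · simp [hac, ih]

def Fin.cycleMod {k i : ℕ} (hi : 0 < i) (hik : i ≤ k) (s : Fin k) : Fin k :=
  ⟨(s + 1) % i, (Nat.mod_lt _ hi).trans_le hik⟩

theorem Fin.val_iterate_cycleMod {k i : ℕ} (hi : 0 < i) (hik : i ≤ k) (n : ℕ) :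
    ((Fin.cycleMod hi hik)^[n] ⟨0, hi.trans_le hik⟩).val = n % i := by
  induction n with
  | zero => simp
  | succ n ih => simp [Function.iterate_succ_apply', Fin.cycleMod, ih, Nat.add_mod]

/-- If binary words u, v form an identity of T_k, then their letter counts are
congruent modulo every i ∈ {1,...,k}, hence modulo lcm(1,...,k).
Letters: `true` is x, `false` is y. -/
theorem identity_imp_counts_congruent (k : ℕ) (u v : List Bool)
    (h : ∀ f g : Fin k → Fin k, ∀ z : Fin k,
        u.foldl (fun s a => if a then f s else g s) z =
        v.foldl (fun s a => if a then f s else g s) z) :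
    (∀ i ∈ Finset.Icc 1 k,
        Nat.ModEq i (u.count true) (v.count true) ∧
        Nat.ModEq i (u.count false) (v.count false)) ∧
    Nat.ModEq ((Finset.Icc 1 k).lcm id) (u.count true) (v.count true) ∧
    Nat.ModEq ((Finset.Icc 1 k).lcm id) (u.count false) (v.count false) := by
  have counts_modEq : ∀ i ∈ Finset.Icc 1 k, u.count true ≡ v.count true [MOD i] ∧
      u.count false ≡ v.count false [MOD i] := by
    intro i hi
    obtain ⟨hi, hik⟩ : 0 < i ∧ i ≤ k := Finset.mem_Icc.1 hi
    set F := Fin.cycleMod hi hik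
    have hx := h F id ⟨0, hi.trans_le hik⟩
    have hy := h id F ⟨0, hi.trans_le hik⟩
    have hflip : (fun (s : Fin k) (a : Bool) => if a then s else F s) =
        fun s a => if a = false then F s else s := by
      funext s a; cases a <;> rfl
    simp only [id, hflip, List.foldl_ite_eq_iterate_count] at hx hy
    exact ⟨by simpa [Nat.ModEq, F, Fin.val_iterate_cycleMod] using congrArg Fin.val hx,
      by simpa [Nat.ModEq, F, Fin.val_iterate_cycleMod] using congrArg Fin.val hy⟩
  exact ⟨counts_modEq, Nat.ModEq.finset_lcm fun i hi => (counts_modEq i hi).1,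
    Nat.ModEq.finset_lcm fun i hi => (counts_modEq i hi).2⟩
end

section
/- For every k ≥ 1 and L = lcm(1,...,k), the pair (x^{k-1+L} y^{k-1}, x^{k-1} y^{k-1+L}) is an identity of T_k: for all f, g : Fin k → Fin k and every point z, g^{k-1}(f^{k-1+L}(z)) = g^{k-1+L}(f^{k-1}(z)). -/
/-!
Orbits in a finite set of size `n` enter their cycle within `n - 1` steps, and every cycle has
length between `1` and `n`, hence dividing `lcm(1, ..., n)`. So `f^[n - 1 + L]` and `f^[n - 1]`
agree for every self-map `f` of an `n`-element set, and both sides of the identity reduce to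
`g^[k - 1] (f^[k - 1] z)`.
-/

open Finset

namespace Function

variable {α : Type*} [Fintype α]

theorem iterate_mem_periodicPts_of_card_sub_one_le (f : α → α) (x : α) {m : ℕ}
    (hm : Fintype.card α - 1 ≤ m) : f^[m] x ∈ periodicPts f := by
  obtain ⟨i, j, hij, hfij⟩ := Fintype.exists_ne_map_eq_of_card_lt
    (fun n : Fin (Fintype.card α + 1) => f^[n] x) (by simp)
  wlog hlt : i < j generalizing i j
  · exact this j i hij.symm hfij.symm (by omega)
  have hperiodic : IsPeriodicPt f (j - i) (f^[i] x) := by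
    rw [IsPeriodicPt, IsFixedPt, ← iterate_add_apply, Nat.sub_add_cancel hlt.le]
    exact hfij.symm
  have hmi : m = (m - i) + i := by omega
  rw [hmi, iterate_add_apply]
  exact mk_mem_periodicPts (by omega) (hperiodic.apply_iterate _)

theorem iterate_add_eq_of_card_sub_one_le (f : α → α) (x : α) {m p : ℕ}
    (hm : Fintype.card α - 1 ≤ m) (hp : (Icc 1 (Fintype.card α)).lcm id ∣ p) :
    f^[m + p] x = f^[m] x := by
  have hx := iterate_mem_periodicPts_of_card_sub_one_le f x hm
  have hperiod_mem : minimalPeriod f (f^[m] x) ∈ Icc 1 (Fintype.card α) :=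
    mem_Icc.2 ⟨minimalPeriod_pos_of_mem_periodicPts hx, minimalPeriod_le_card⟩
  have hperiodic : IsPeriodicPt f p (f^[m] x) :=
    isPeriodicPt_iff_minimalPeriod_dvd.2 ((dvd_lcm hperiod_mem).trans hp)
  rw [add_comm, iterate_add_apply]
  exact hperiodic

end Function

theorem unbalanced_identity_general (k : ℕ) (f g : Fin k → Fin k) (z : Fin k) :
    g^[k - 1] (f^[k - 1 + (Finset.Icc 1 k).lcm id] z) =
    g^[k - 1 + (Finset.Icc 1 k).lcm id] (f^[k - 1] z) := by
  have hcard : Fintype.card (Fin k) - 1 ≤ k - 1 := by simp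
  have hlcm : (Icc 1 (Fintype.card (Fin k))).lcm id ∣ (Icc 1 k).lcm id := by simp
  rw [Function.iterate_add_eq_of_card_sub_one_le f z hcard hlcm,
    Function.iterate_add_eq_of_card_sub_one_le g _ hcard hlcm]

/-- The unbalanced identity x^{k-1+L} y^{k-1} ≡ x^{k-1} y^{k-1+L} in T_k,
with L = lcm(1,...,k). -/
theorem unbalanced_identity (k : ℕ) (hk : 1 ≤ k) (f g : Fin k → Fin k) (z : Fin k) :
    g^[k - 1] (f^[k - 1 + (Finset.Icc 1 k).lcm id] z) =
    g^[k - 1 + (Finset.Icc 1 k).lcm id] (f^[k - 1] z) :=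
  unbalanced_identity_general k f g z
end

section
/- Let k ≥ 2, M = lcm(1,...,k-1). For all functions f, g : Fin k → Fin k, the two transformations given by the words (xy)^{k-2+M}(yx)^k(xy)^{k-1} and (xy)^{k-2}(yx)^k(xy)^{k-1+M} (substituting f for x and g for y, composing in reading order) are equal. That is, this pair is an identity of T_k. -/
lemma iter_congr {α : Type*} (h : α → α) {m n : ℕ} (e : m = n) (x : α) :
    h^[m] x = h^[n] x := by rw [e]

lemma aux_conj {α : Type*} (f g : α → α) (n : ℕ) (x : α) :
    (fun w => f (g w))^[n + 1] x = f ((fun w => g (f w))^[n] (g x)) := by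
  induction n generalizing x with
  | zero => simp
  | succ n ih =>
    rw [Function.iterate_succ_apply]
    show (fun w => f (g w))^[n + 1] (f (g x)) = _
    rw [ih]
    rw [Function.iterate_succ_apply]

lemma aux_period {α : Type*} (h : α → α) (x : α) (i ℓ : ℕ)
    (hp : h^[i + ℓ] x = h^[i] x) {n : ℕ} (hn : i ≤ n) (c : ℕ) :
    h^[n + c * ℓ] x = h^[n] x := by
  have key : ∀ m, i ≤ m → h^[m + ℓ] x = h^[m] x := by
    intro m hm
    rw [show m + ℓ = (m - i) + (i + ℓ) by omega, Function.iterate_add_apply, hp,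
      ← Function.iterate_add_apply, show m - i + i = m by omega]
  induction c with
  | zero => simp
  | succ c ih =>
    rw [show (c + 1) * ℓ = c * ℓ + ℓ by ring, ← Nat.add_assoc,
      key (n + c * ℓ) (by omega), ih]

lemma aux_dichotomy (k : ℕ) (hk : 2 ≤ k) (h : Fin k → Fin k) (x : Fin k) :
    (∀ y, h^[k] y = y) ∨ (∀ y, h^[k - 1] y = h^[k - 1] x) ∨
      (∃ i ℓ, i ≤ k - 2 ∧ 1 ≤ ℓ ∧ ℓ ≤ k - 1 ∧ h^[i + ℓ] x = h^[i] x) := by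
  have hp : ∃ j, j ≤ k ∧ ∃ i, i < j ∧ h^[i] x = h^[j] x := by
    obtain ⟨a, b, hab, heq⟩ := Fintype.exists_ne_map_eq_of_card_lt
      (fun m : Fin (k + 1) => h^[(m : ℕ)] x) (by simp)
    have hne : (a : ℕ) ≠ (b : ℕ) := fun hh => hab (Fin.ext hh)
    rcases Nat.lt_or_ge (a : ℕ) (b : ℕ) with hlt | hge
    · exact ⟨b, Nat.lt_succ_iff.mp b.isLt, a, hlt, heq⟩
    · exact ⟨a, Nat.lt_succ_iff.mp a.isLt, b, by omega, heq.symm⟩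
  obtain ⟨hjk, i, hij, hcol⟩ := Nat.find_spec hp
  by_cases hjle : Nat.find hp ≤ k - 1
  · right; right
    exact ⟨i, Nat.find hp - i, by omega, by omega, by omega,
      by rw [show i + (Nat.find hp - i) = Nat.find hp by omega]; exact hcol.symm⟩
  · have hjeq : Nat.find hp = k := by omega
    have hcol' : h^[i] x = h^[k] x := by rw [hjeq] at hcol; exact hcol
    have hik' : i < k := by omega
    have hinj : ∀ a b : ℕ, a < b → b < k → h^[a] x ≠ h^[b] x := by
      intro a b hab hbk hne
      exact Nat.find_min hp (by omega : b < Nat.find hp) ⟨by omega, a, hab, hne⟩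
    have hsurj : ∀ y, ∃ m, m < k ∧ h^[m] x = y := by
      have hi2 : Function.Injective (fun m : Fin k => h^[(m : ℕ)] x) := by
        intro a b hh
        by_contra hne
        have hne' : (a : ℕ) ≠ (b : ℕ) := fun h2 => hne (Fin.ext h2)
        rcases Nat.lt_or_ge (a : ℕ) (b : ℕ) with hlt | hge
        · exact hinj a b hlt b.isLt hh
        · exact hinj b a (by omega) a.isLt hh.symm
      have hs := Finite.injective_iff_surjective.mp hi2
      intro y
      obtain ⟨m, hm⟩ := hs y
      exact ⟨m, m.isLt, hm⟩
    rcases Nat.eq_zero_or_pos i with hi0 | hipos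
    · left
      intro y
      obtain ⟨m, hm, rfl⟩ := hsurj y
      have hx : h^[k] x = x := by
        rw [hi0] at hcol'
        simpa using hcol'.symm
      rw [← Function.iterate_add_apply, show k + m = m + k by omega,
        Function.iterate_add_apply, hx]
    · by_cases hik : i = k - 1
      · right; left
        intro y
        obtain ⟨m, hm, rfl⟩ := hsurj y
        have hper : h^[(k - 1) + 1] x = h^[k - 1] x := by
          rw [Nat.sub_add_cancel (by omega : 1 ≤ k), ← hik]
          exact hcol'.symm
        have := aux_period h x (k - 1) 1 hper (le_refl (k - 1)) m
        rw [← Function.iterate_add_apply, show (k - 1) + m = (k - 1) + m * 1 by omega, this]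
      · right; right
        exact ⟨i, k - i, by omega, by omega, by omega,
          by rw [show i + (k - i) = k by omega]; exact hcol'.symm⟩

lemma aux_const {k : ℕ} (hk : 2 ≤ k) (h : Fin k → Fin k) (x : Fin k)
    (hc : ∀ y, h^[k - 1] y = h^[k - 1] x) (M : ℕ) (A B : Fin k) :
    h^[k - 1] A = h^[k - 1 + M] B := by
  have hC : h (h^[k - 1] x) = h^[k - 1] x := by
    rw [← Function.iterate_succ_apply' h (k - 1) x, Function.iterate_succ_apply, hc (h x)]
  rw [hc A, show k - 1 + M = M + (k - 1) by omega, Function.iterate_add_apply, hc B,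
    Function.iterate_fixed hC M]

lemma aux_hprime {k : ℕ} (hk : 2 ≤ k) (f g : Fin k → Fin k)
    (h1 : ∀ y, (fun w => g (f w))^[k] y = y) :
    ∀ y, (fun w => f (g w))^[k] y = y := by
  set h : Fin k → Fin k := fun w => g (f w) with hh
  have hstep : ∀ a : Fin k, h^[k] a = h^[k - 1] (h a) := by
    intro a
    rw [← Function.iterate_succ_apply]
    exact iter_congr h (by omega) a
  have hinj : Function.Injective h := by
    intro a b hab
    have e := congrArg (h^[k - 1]) hab
    simp only [← hstep] at e
    rwa [h1 a, h1 b] at e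
  have hfinj : Function.Injective f := by
    intro a b hab
    exact hinj (show g (f a) = g (f b) by rw [hab])
  have hfsurj := Finite.injective_iff_surjective.mp hfinj
  intro y
  obtain ⟨v, rfl⟩ := hfsurj y
  have e2 : h^[k - 1] (h v) = v := by rw [← hstep v, h1 v]
  calc (fun w => f (g w))^[k] (f v)
      = (fun w => f (g w))^[k - 1 + 1] (f v) := iter_congr _ (by omega) _
    _ = f (h^[k - 1] (g (f v))) := aux_conj f g (k - 1) (f v)
    _ = f v := congrArg f e2

/-- The identity (xy)^{k-2+M}(yx)^k(xy)^{k-1} ≡ (xy)^{k-2}(yx)^k(xy)^{k-1+M} in T_k,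
where M = lcm(1,...,k-1); xy acts as z ↦ g(f z) and yx as z ↦ f(g z). -/
theorem short_identity (k : ℕ) (hk : 2 ≤ k) (f g : Fin k → Fin k) (z : Fin k) :
    (fun w => g (f w))^[k - 1]
        ((fun w => f (g w))^[k]
          ((fun w => g (f w))^[k - 2 + (Finset.Icc 1 (k - 1)).lcm id] z)) =
    (fun w => g (f w))^[k - 1 + (Finset.Icc 1 (k - 1)).lcm id]
        ((fun w => f (g w))^[k]
          ((fun w => g (f w))^[k - 2] z)) := by
  set M := (Finset.Icc 1 (k - 1)).lcm id with hM
  set h : Fin k → Fin k := fun w => g (f w) with hh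
  set h' : Fin k → Fin k := fun w => f (g w) with hh'
  have hdvd : ∀ ℓ : ℕ, 1 ≤ ℓ → ℓ ≤ k - 1 → ∃ c, M = c * ℓ := by
    intro ℓ h1 h2
    have hd : ℓ ∣ M := Finset.dvd_lcm (by simp [Finset.mem_Icc]; omega)
    obtain ⟨c, hc⟩ := hd
    exact ⟨c, by rw [hc, Nat.mul_comm]⟩
  have hper : ∀ (x : Fin k) (i ℓ : ℕ), 1 ≤ ℓ → ℓ ≤ k - 1 → h^[i + ℓ] x = h^[i] x →
      ∀ n, i ≤ n → h^[n + M] x = h^[n] x := by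
    intro x i ℓ h1 h2 hcol n hn
    obtain ⟨c, hc⟩ := hdvd ℓ h1 h2
    rw [hc]
    exact aux_period h x i ℓ hcol hn c
  rcases aux_dichotomy k hk h z with h1 | h2 | h3
  · have hid := aux_hprime hk f g h1
    rw [← hh'] at hid
    simp only [hid]
    rw [← Function.iterate_add_apply, ← Function.iterate_add_apply]
    exact iter_congr h (by omega) z
  · exact aux_const hk h z h2 M _ _
  · obtain ⟨i, ℓ, hi, hl1, hl2, hcol⟩ := h3
    have hz : h^[k - 2 + M] z = h^[k - 2] z := hper z i ℓ hl1 hl2 hcol (k - 2) hi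
    rw [hz]
    rcases aux_dichotomy k hk h (h'^[k] (h^[k - 2] z)) with g1 | g2 | g3
    · have hid := aux_hprime hk f g g1
      rw [← hh'] at hid
      simp only [hid]
      rw [← Function.iterate_add_apply, ← Function.iterate_add_apply]
      have hp2 := hper z i ℓ hl1 hl2 hcol (k - 1 + (k - 2)) (by omega)
      rw [iter_congr h (by omega : k - 1 + M + (k - 2) = k - 1 + (k - 2) + M) z, hp2]
    · exact aux_const hk h _ g2 M _ _
    · obtain ⟨i', ℓ', hi', hl1', hl2', hcol'⟩ := g3
      exact (hper _ i' ℓ' hl1' hl2' hcol' (k - 1) (by omega)).symm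
end

section
/- Let a, b be positive integers such that for every permutation π ∈ S_k, the order of π divides a or divides b. Then for all σ, τ ∈ S_k: (στ)^a (τσ)^b = (τσ)^b (στ)^a. -/
/-- If every element order in S_k divides a or b, then (στ)^a(τσ)^b = (τσ)^b(στ)^a. -/
theorem ab_identity (k a b : ℕ) (ha : 0 < a) (hb : 0 < b)
    (h : ∀ π : Equiv.Perm (Fin k), orderOf π ∣ a ∨ orderOf π ∣ b)
    (σ τ : Equiv.Perm (Fin k)) :
    (σ * τ) ^ a * (τ * σ) ^ b = (τ * σ) ^ b * (σ * τ) ^ a := by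
  rcases h (σ * τ) with hd | hd
  · rw [orderOf_dvd_iff_pow_eq_one.mp hd, one_mul, mul_one]
  · have h1 : (σ * τ) ^ b = 1 := orderOf_dvd_iff_pow_eq_one.mp hd
    have h2 : (τ * σ) ^ b = 1 := by
      have : τ * σ = σ⁻¹ * (σ * τ) * (σ⁻¹)⁻¹ := by group
      rw [this, conj_pow, h1, mul_one]
      group
    rw [h2, one_mul, mul_one]
end

section
/- In the symmetric group S_5 (equivalently S_6), for all σ, τ: (στ)^1(τσ)^6(στ)^5(τσ)^4 = (τσ)^4(στ)^5(τσ)^6(στ)^1. Equivalently the positive identity (xy)(yx)^6(xy)^5(yx)^4 = (yx)^4(xy)^5(yx)^6(xy) holds in S_5. -/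
set_option maxRecDepth 10000 in
lemma perm5_pow_eq_one (π : Equiv.Perm (Fin 5)) :
    π^2 = 1 ∨ π^3 = 1 ∨ π^4 = 1 ∨ π^5 = 1 ∨ π^6 = 1 := by
  revert π; decide

lemma s5_aux {G : Type*} [Group G] (a b : G)
    (key : ∀ k : ℕ, a ^ k = 1 → b ^ k = 1)
    (hd : a^2 = 1 ∨ a^3 = 1 ∨ a^4 = 1 ∨ a^5 = 1 ∨ a^6 = 1) :
    a ^ 1 * b ^ 6 * a ^ 5 * b ^ 4 = b ^ 4 * a ^ 5 * b ^ 6 * a ^ 1 := by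
  rcases hd with h | h | h | h | h
  · have hb2 := key 2 h
    have h6 : b ^ 6 = 1 := by rw [show (6:ℕ) = 2*3 from rfl, pow_mul, hb2, one_pow]
    have h4 : b ^ 4 = 1 := by rw [show (4:ℕ) = 2*2 from rfl, pow_mul, hb2, one_pow]
    have h5 : a ^ 5 = a := by
      rw [show (5:ℕ) = 2*2+1 from rfl, pow_succ, pow_mul, h, one_pow, one_mul]
    simp [h6, h4, h5]
  · have hb3 := key 3 h
    have h6 : b ^ 6 = 1 := by rw [show (6:ℕ) = 3*2 from rfl, pow_mul, hb3, one_pow]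
    have h4 : b ^ 4 = b := by
      rw [show (4:ℕ) = 3+1 from rfl, pow_succ, hb3, one_mul]
    have h5 : a ^ 5 = a ^ 2 := by
      rw [show (5:ℕ) = 3+2 from rfl, pow_add, h, one_mul]
    have l : a * a ^ 2 = 1 := by rw [← pow_succ']; exact h
    have r : a ^ 2 * a = 1 := by rw [← pow_succ]; exact h
    simp only [h6, h4, h5, pow_one, mul_one, one_mul]
    rw [l, one_mul, mul_assoc, r, mul_one]
  · have hb4 := key 4 h
    have h6 : b ^ 6 = b ^ 2 := by
      rw [show (6:ℕ) = 4+2 from rfl, pow_add, hb4, one_mul]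
    have h5 : a ^ 5 = a := by
      rw [show (5:ℕ) = 4+1 from rfl, pow_succ, h, one_mul]
    simp [h6, hb4, h5]
  · have hb5 := key 5 h
    have h6 : b ^ 6 = b := by
      rw [show (6:ℕ) = 5+1 from rfl, pow_succ, hb5, one_mul]
    simp only [h, h6, pow_one, mul_one, one_mul]
    rw [mul_assoc, ← pow_succ', hb5, mul_one, ← pow_succ, hb5, one_mul]
  · have hb6 := key 6 h
    have r : a ^ 5 * a = 1 := by rw [← pow_succ]; exact h
    have l : a * a ^ 5 = 1 := by rw [← pow_succ']; exact h
    simp only [hb6, pow_one, mul_one, one_mul]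
    rw [l, one_mul, mul_assoc, r, mul_one]

/-- The positive identity (xy)(yx)^6(xy)^5(yx)^4 = (yx)^4(xy)^5(yx)^6(xy) in S_5. -/
theorem s5_identity (σ τ : Equiv.Perm (Fin 5)) :
    (σ * τ) ^ 1 * (τ * σ) ^ 6 * (σ * τ) ^ 5 * (τ * σ) ^ 4 =
    (τ * σ) ^ 4 * (σ * τ) ^ 5 * (τ * σ) ^ 6 * (σ * τ) ^ 1 := by
  apply s5_aux
  · intro k hk
    have : τ * σ = τ * (σ * τ) * τ⁻¹ := by group
    rw [this, conj_pow, hk, mul_one, mul_inv_cancel]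
  · exact perm5_pow_eq_one _
end

section
/- Let a, b, c, d be positive integers such that for every q which is the order of some element of S_k, at least one of the following holds (or the version with b,c swapped and a,d swapped): (i) q divides both a and c; (ii) q divides both a+c and b; (iii) q divides a and b ≡ d (mod q). Then for all σ, τ ∈ S_k: (στ)^a (τσ)^b (στ)^c (τσ)^d = (τσ)^d (στ)^c (τσ)^b (στ)^a. -/
/-- If for every element order q of S_k one of conditions (i)-(iii) (or the
swapped version) holds, then (στ)^a(τσ)^b(στ)^c(τσ)^d = (τσ)^d(στ)^c(τσ)^b(στ)^a. -/
theorem abcd_identity (k a b c d : ℕ) (ha : 0 < a) (hb : 0 < b) (hc : 0 < c)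
    (hd : 0 < d)
    (h : ∀ π : Equiv.Perm (Fin k),
      ((orderOf π ∣ a ∧ orderOf π ∣ c) ∨
       (orderOf π ∣ a + c ∧ orderOf π ∣ b) ∨
       (orderOf π ∣ a ∧ Nat.ModEq (orderOf π) b d)) ∨
      ((orderOf π ∣ d ∧ orderOf π ∣ b) ∨
       (orderOf π ∣ d + b ∧ orderOf π ∣ c) ∨
       (orderOf π ∣ d ∧ Nat.ModEq (orderOf π) c a)))
    (σ τ : Equiv.Perm (Fin k)) :
    (σ * τ) ^ a * (τ * σ) ^ b * (σ * τ) ^ c * (τ * σ) ^ d =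
    (τ * σ) ^ d * (σ * τ) ^ c * (τ * σ) ^ b * (σ * τ) ^ a := by
  set x := σ * τ with hx
  set y := τ * σ with hy
  have hsemi : SemiconjBy σ y x := by
    simp [SemiconjBy, hx, hy, mul_assoc]
  have hord : orderOf y = orderOf x := SemiconjBy.orderOf_eq σ hsemi
  have hq := h x
  rcases hq with (⟨h1, h2⟩ | ⟨h1, h2⟩ | ⟨h1, h2⟩) | (⟨h1, h2⟩ | ⟨h1, h2⟩ | ⟨h1, h2⟩)
  · have hxa : x ^ a = 1 := orderOf_dvd_iff_pow_eq_one.mp h1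
    have hxc : x ^ c = 1 := orderOf_dvd_iff_pow_eq_one.mp h2
    rw [hxa, hxc]
    group
  · have hxac : x ^ (a + c) = 1 := orderOf_dvd_iff_pow_eq_one.mp h1
    have hyb : y ^ b = 1 := orderOf_dvd_iff_pow_eq_one.mp (hord ▸ h2)
    have h3 : x ^ a * x ^ c = 1 := by rw [← pow_add]; exact hxac
    have h4 : x ^ c * x ^ a = 1 := by rw [← pow_add, add_comm]; exact hxac
    rw [hyb]
    calc x ^ a * 1 * x ^ c * y ^ d = (x ^ a * x ^ c) * y ^ d := by group
    _ = y ^ d * (x ^ c * x ^ a) := by rw [h3, h4]; group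
    _ = y ^ d * x ^ c * 1 * x ^ a := by group
  · have hxa : x ^ a = 1 := orderOf_dvd_iff_pow_eq_one.mp h1
    have hbd : y ^ b = y ^ d := (pow_eq_pow_iff_modEq).mpr (by rwa [hord])
    rw [hxa, hbd]
    group
  · have hyd : y ^ d = 1 := orderOf_dvd_iff_pow_eq_one.mp (hord ▸ h1)
    have hyb : y ^ b = 1 := orderOf_dvd_iff_pow_eq_one.mp (hord ▸ h2)
    rw [hyd, hyb]
    group
  · have hydb : y ^ (d + b) = 1 := orderOf_dvd_iff_pow_eq_one.mp (hord ▸ h1)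
    have hxc : x ^ c = 1 := orderOf_dvd_iff_pow_eq_one.mp h2
    have hbd : y ^ b * y ^ d = 1 := by rw [← pow_add, add_comm]; exact hydb
    have hdb : y ^ d * y ^ b = 1 := by rw [← pow_add]; exact hydb
    rw [hxc]
    calc x ^ a * y ^ b * 1 * y ^ d = x ^ a * (y ^ b * y ^ d) := by group
    _ = (y ^ d * y ^ b) * x ^ a := by rw [hbd, hdb]; group
    _ = y ^ d * 1 * y ^ b * x ^ a := by group
  · have hyd : y ^ d = 1 := orderOf_dvd_iff_pow_eq_one.mp (hord ▸ h1)
    have hca : x ^ c = x ^ a := (pow_eq_pow_iff_modEq).mpr h2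
    rw [hyd, hca]
    group
end

section
/- Every permutation of a k-element set either has all cycle lengths at most m, in which case its order divides lcm(1,...,m), or has some cycle of length greater than m (with 2m ≥ k), in which case it has exactly one such cycle and its order divides lcm(1,...,k-m) times the product of that cycle's length over its prime power factorization; in particular, with m = ⌊2k/3⌋, a = lcm(1,...,m), and b = lcm(1,...,k-m) · (product of all prime powers p^i with m < p^i ≤ k), the order of every element of S_k divides a or b. -/
open Classical in
/-- Dichotomy on cycle lengths of permutations and the resulting divisibility:
with m = ⌊2k/3⌋, a = lcm(1..m), b = lcm(1..k-m) · ∏ prime powers in (m,k],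
every element order of S_k divides a or b. -/
theorem order_dvd_a_or_b (k : ℕ) :
    (∀ m : ℕ, k ≤ 2 * m → ∀ π : Equiv.Perm (Fin k),
      ((∀ ℓ ∈ π.cycleType, ℓ ≤ m) ∧ orderOf π ∣ (Finset.Icc 1 m).lcm id) ∨
      (∃ ℓ ∈ π.cycleType, m < ℓ ∧
        Multiset.countP (fun x => m < x) π.cycleType = 1 ∧
        orderOf π ∣ (Finset.Icc 1 (k - m)).lcm id * ℓ)) ∧
    (∀ π : Equiv.Perm (Fin k),
      orderOf π ∣ (Finset.Icc 1 (2 * k / 3)).lcm id ∨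
      orderOf π ∣ (Finset.Icc 1 (k - 2 * k / 3)).lcm id *
        ((Finset.Ioc (2 * k / 3) k).prod fun n => if IsPrimePow n then n else 1)) := by
  have hsum : ∀ π : Equiv.Perm (Fin k), π.cycleType.sum ≤ k := fun π => by
    rw [Equiv.Perm.sum_cycleType]; simpa using Finset.card_le_univ π.support
  have part1 : ∀ m : ℕ, k ≤ 2 * m → ∀ π : Equiv.Perm (Fin k),
      ((∀ ℓ ∈ π.cycleType, ℓ ≤ m) ∧ orderOf π ∣ (Finset.Icc 1 m).lcm id) ∨
      (∃ ℓ ∈ π.cycleType, m < ℓ ∧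
        Multiset.countP (fun x => m < x) π.cycleType = 1 ∧
        orderOf π ∣ (Finset.Icc 1 (k - m)).lcm id * ℓ) := by
    intro m hkm π
    by_cases h : ∀ ℓ ∈ π.cycleType, ℓ ≤ m
    · left
      refine ⟨h, ?_⟩
      rw [← Equiv.Perm.lcm_cycleType]
      refine Multiset.lcm_dvd.2 fun x hx => Finset.dvd_lcm ?_
      exact Finset.mem_Icc.2
        ⟨le_trans one_le_two (Equiv.Perm.two_le_of_mem_cycleType hx), h x hx⟩
    · right
      push_neg at h
      obtain ⟨ℓ, hℓmem, hmℓ⟩ := h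
      obtain ⟨t, ht⟩ := Multiset.exists_cons_of_mem hℓmem
      have htle : ∀ x ∈ t, x ≤ m := by
        intro x hx
        by_contra hxm
        push_neg at hxm
        have h1 : ℓ + x ≤ π.cycleType.sum := by
          rw [ht, Multiset.sum_cons]
          exact add_le_add le_rfl (Multiset.single_le_sum (fun y _ => Nat.zero_le y) x hx)
        have := hsum π
        omega
      have hcount : Multiset.countP (fun x => m < x) π.cycleType = 1 := by
        rw [ht, Multiset.countP_cons]
        have h0 : Multiset.countP (fun x => m < x) t = 0 := by
          rw [Multiset.countP_eq_zero]
          intro x hx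
          simpa using Nat.not_lt.2 (htle x hx)
        simp [h0, hmℓ]
      refine ⟨ℓ, hℓmem, hmℓ, hcount, ?_⟩
      rw [← Equiv.Perm.lcm_cycleType, ht, Multiset.lcm_cons]
      apply lcm_dvd
      · exact Dvd.dvd.mul_left dvd_rfl _
      · refine dvd_mul_of_dvd_left (Multiset.lcm_dvd.2 fun x hx => Finset.dvd_lcm ?_) _
        have h2 : 2 ≤ x := Equiv.Perm.two_le_of_mem_cycleType
          (by rw [ht]; exact Multiset.mem_cons_of_mem hx)
        have h1 : ℓ + x ≤ k := by
          have hs := hsum π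
          rw [ht, Multiset.sum_cons] at hs
          have hx' := Multiset.single_le_sum (fun y _ => Nat.zero_le y) x hx
          omega
        exact Finset.mem_Icc.2 ⟨by omega, by omega⟩
  refine ⟨part1, ?_⟩
  intro π
  by_cases hk : k ≤ 1
  · left
    have h1 : orderOf π ∣ Nat.factorial k := by
      simpa [Fintype.card_perm] using orderOf_dvd_card (x := π)
    interval_cases k <;> simpa using h1
  push_neg at hk
  set m := 2 * k / 3 with hm
  have hkm : k ≤ 2 * m := by omega
  rcases part1 m hkm π with ⟨_, hdvd⟩ | ⟨ℓ, hℓmem, hmℓ, hcount, hdvd⟩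
  · exact Or.inl hdvd
  have hℓk : ℓ ≤ k :=
    le_trans (Multiset.single_le_sum (fun y _ => Nat.zero_le y) ℓ hℓmem) (hsum π)
  by_cases hpp : IsPrimePow ℓ
  · right
    refine hdvd.trans (mul_dvd_mul_left _ ?_)
    have := Finset.dvd_prod_of_mem (fun n => if IsPrimePow n then n else 1)
      (Finset.mem_Ioc.2 ⟨hmℓ, hℓk⟩)
    simpa [hpp] using this
  · left
    rw [← Equiv.Perm.lcm_cycleType]
    refine Multiset.lcm_dvd.2 fun x hx => ?_
    have hx2 : 2 ≤ x := Equiv.Perm.two_le_of_mem_cycleType hx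
    by_cases hxm : x ≤ m
    · exact Finset.dvd_lcm (Finset.mem_Icc.2 ⟨by omega, hxm⟩)
    · push_neg at hxm
      have hxℓ : x = ℓ := by
        obtain ⟨t, ht⟩ := Multiset.exists_cons_of_mem hℓmem
        rw [ht, Multiset.mem_cons] at hx
        rcases hx with h | h
        · exact h
        · exfalso
          rw [ht, Multiset.countP_cons] at hcount
          have hpos : 0 < Multiset.countP (fun x => m < x) t :=
            Multiset.countP_pos.2 ⟨x, h, hxm⟩
          simp only [hmℓ, if_pos] at hcount
          omega
      subst hxℓ
      rcases eq_or_ne ((Finset.Icc 1 m).lcm id) 0 with h0 | h0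
      · rw [h0]; exact dvd_zero _
      have hx0 : x ≠ 0 := by omega
      rw [← Nat.factorization_le_iff_dvd hx0 h0]
      intro p
      rcases Nat.eq_zero_or_pos (x.factorization p) with hv | hv
      · simp [hv]
      have hp : p.Prime := Nat.prime_of_mem_primeFactors
        (Nat.support_factorization x ▸ Finsupp.mem_support_iff.2 (by omega))
      have hppm : p ^ x.factorization p ≤ m := by
        by_contra hgt
        push_neg at hgt
        have hdvd' : p ^ x.factorization p ∣ x := Nat.ordProj_dvd x p
        obtain ⟨c, hc⟩ := hdvd'
        have hc1 : c ≠ 0 := by rintro rfl; simp at hc; omega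
        have hc2 : c ≠ 1 := by
          rintro rfl
          exact hpp ⟨p, x.factorization p, hp.prime, hv, by omega⟩
        have : x ≥ 2 * (p ^ x.factorization p) := by
          calc x = p ^ x.factorization p * c := hc
          _ ≥ p ^ x.factorization p * 2 := by
              exact Nat.mul_le_mul_left _ (by omega)
          _ = 2 * p ^ x.factorization p := by ring
        omega
      have hmem : p ^ x.factorization p ∈ Finset.Icc 1 m :=
        Finset.mem_Icc.2 ⟨Nat.one_le_pow _ _ hp.pos, hppm⟩
      exact (hp.pow_dvd_iff_le_factorization h0).1 (Finset.dvd_lcm hmem)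
end
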